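/- An index I satisfies additivity, null artists, equal global impact of users, and symmetry on fans if and only if there exists, for each finite set of artists N, a positive real number λ_N such that for every streaming problem (N, M, t) and every i ∈ N, I_i(N, M, t) = λ_N · Sh_i(N, M, t); in particular, the associated reward rule of such an I coincides with the Shapley index. -/

import Mathlib

open Finset

/-- A streaming problem: a finite nonempty set `N` of artists, a finite nonempty set
`M` of users, and a streams matrix `t` such that every user streamed some content. -/
structure StreamingProblem where
  N : Finset ℕ
  M : Finset ℕ
  t : ℕ → ℕ → ℕ
  N_nonempty : N.Nonempty
  M_nonempty : M.Nonempty
  streams_pos : ∀ j ∈ M, 0 < ∑ i ∈ N, t i j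

namespace StreamingProblem

/-- `L^j` : the set of artists streamed by user `j`. -/
def Lset (P : StreamingProblem) (j : ℕ) : Finset ℕ :=
  P.N.filter fun i => 0 < P.t i j

/-- `F_i` : the set of fans of artist `i`. -/
def Fset (P : StreamingProblem) (i : ℕ) : Finset ℕ :=
  P.M.filter fun j => 0 < P.t i j

/-- The Shapley index: `Sh_i(N,M,t) = ∑_{j ∈ M : t_{ij} > 0} 1 / |L^j|`. -/
noncomputable def Sh (P : StreamingProblem) (i : ℕ) : ℝ :=
  ∑ j ∈ P.M.filter (fun j => 0 < P.t i j), (1 : ℝ) / ((P.Lset j).card : ℝ)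

end StreamingProblem

open StreamingProblem

/-- Additivity of an index. -/
def AdditiveIndex (I : StreamingProblem → ℕ → ℝ) : Prop :=
  ∀ P P₁ P₂ : StreamingProblem,
    P₁.N = P.N → P₂.N = P.N →
    P.M = P₁.M ∪ P₂.M → Disjoint P₁.M P₂.M →
    (∀ i ∈ P.N, ∀ j ∈ P₁.M, P.t i j = P₁.t i j) →
    (∀ i ∈ P.N, ∀ j ∈ P₂.M, P.t i j = P₂.t i j) →
    ∀ i ∈ P.N, I P i = I P₁ i + I P₂ i

/-- Reasonable lower bound of an index. -/
def ReasonableLowerBound (I : StreamingProblem → ℕ → ℝ) : Prop :=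
  ∀ P : StreamingProblem, ∀ C ⊆ P.M,
    (C.card : ℝ) ≤
      (∑ i ∈ P.N.filter (fun i => ∃ j ∈ C, 0 < P.t i j), I P i) * (P.M.card : ℝ) /
        ∑ k ∈ P.N, I P k

/-- Equal global impact of users of an index. -/
def EqualGlobalImpactUsers (I : StreamingProblem → ℕ → ℝ) : Prop :=
  ∀ P Q Q' : StreamingProblem, ∀ j ∈ P.M, ∀ j' ∈ P.M, j ≠ j' →
    Q.N = P.N → Q.M = P.M.erase j → Q.t = P.t →
    Q'.N = P.N → Q'.M = P.M.erase j' → Q'.t = P.t →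
    ∑ i ∈ Q.N, I Q i = ∑ i ∈ Q'.N, I Q' i

/-- Symmetry on fans of an index. -/
def SymmetryOnFans (I : StreamingProblem → ℕ → ℝ) : Prop :=
  ∀ P : StreamingProblem, ∀ i ∈ P.N, ∀ i' ∈ P.N,
    P.Fset i = P.Fset i' → I P i = I P i'

/-- Order preservation of an index. -/
def OrderPreservation (I : StreamingProblem → ℕ → ℝ) : Prop :=
  ∀ P : StreamingProblem, ∀ i ∈ P.N, ∀ i' ∈ P.N,
    (∀ j ∈ P.M, P.t i j ≤ P.t i' j) → I P i ≤ I P i'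

/-- Non-unilateral manipulability of an index. -/
def NonUnilateralManipulability (I : StreamingProblem → ℕ → ℝ) : Prop :=
  ∀ P P' : StreamingProblem, ∀ i ∈ P.N,
    P'.N = P.N → P'.M = P.M →
    P.Fset i = P'.Fset i →
    (∀ j ∈ P.M, P.t i j ≤ P'.t i j) →
    (∀ k ∈ P.N, k ≠ i → ∀ j ∈ P.M, P.t k j = P'.t k j) →
    I P' i ≤ I P i

/-- Null artists axiom of an index. -/
def NullArtists (I : StreamingProblem → ℕ → ℝ) : Prop :=
  ∀ P : StreamingProblem, ∀ i ∈ P.N, (∑ j ∈ P.M, P.t i j) = 0 → I P i = 0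

/-- Equal impact of artists of an index. -/
def EqualImpactArtists (I : StreamingProblem → ℕ → ℝ) : Prop :=
  ∀ P Q Q' : StreamingProblem, ∀ i ∈ P.N, ∀ i' ∈ P.N, i ≠ i' →
    Q.N = P.N.erase i' → Q.M = P.M → Q.t = P.t →
    Q'.N = P.N.erase i → Q'.M = P.M → Q'.t = P.t →
    I P i - I Q i = I P i' - I Q' i'

/-- An index assigns nonnegative reals to the artists, with positive total sum. -/
def IsIndex (I : StreamingProblem → ℕ → ℝ) : Prop :=
  ∀ P : StreamingProblem, (∀ i ∈ P.N, 0 ≤ I P i) ∧ 0 < ∑ i ∈ P.N, I P i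

/-- The reward rule `R^I` associated with an index `I`. -/
noncomputable def Reward (I : StreamingProblem → ℕ → ℝ) (P : StreamingProblem) (i : ℕ) : ℝ :=
  I P i * (P.M.card : ℝ) / ∑ k ∈ P.N, I P k


/-!
By additivity, an index is the sum of its values on the one-user subproblems. On a one-user
problem, null artists and symmetry on fans force the total to be split equally among the
streamed artists, i.e. `I = (total) · Sh`. Equal global impact of users, applied to two-user
problems, shows that this total depends only on `N`; it is `λ_N`. Conversely `λ_N · Sh` inherits
the four axioms from `Sh`, and since `∑ᵢ Shᵢ = |M|` the reward rule cancels `λ_N`.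
-/

namespace StreamingProblem

lemma Lset_nonempty (P : StreamingProblem) {j : ℕ} (hj : j ∈ P.M) : (P.Lset j).Nonempty := by
  obtain ⟨i, hi, hij⟩ := Finset.exists_ne_zero_of_sum_ne_zero (P.streams_pos j hj).ne'
  exact ⟨i, Finset.mem_filter.mpr ⟨hi, Nat.pos_of_ne_zero hij⟩⟩

lemma Lset_congr {P Q : StreamingProblem} {j : ℕ} (hN : Q.N = P.N)
    (ht : ∀ i ∈ P.N, P.t i j = Q.t i j) : P.Lset j = Q.Lset j := by
  rw [Lset, Lset, hN]
  exact Finset.filter_congr fun i hi => by rw [ht i hi]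

lemma Sh_eq_sum_ite (P : StreamingProblem) (i : ℕ) :
    P.Sh i = ∑ j ∈ P.M, if 0 < P.t i j then 1 / ((P.Lset j).card : ℝ) else 0 :=
  Finset.sum_filter _ _

lemma Sh_of_M_eq_singleton {P : StreamingProblem} {j : ℕ} (hM : P.M = {j}) (i : ℕ) :
    P.Sh i = if 0 < P.t i j then 1 / ((P.Lset j).card : ℝ) else 0 := by
  rw [Sh_eq_sum_ite, hM, Finset.sum_singleton]

lemma sum_Sh (P : StreamingProblem) : ∑ i ∈ P.N, P.Sh i = P.M.card := by
  simp_rw [Sh_eq_sum_ite]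
  rw [Finset.sum_comm, Finset.card_eq_sum_ones, Nat.cast_sum, Nat.cast_one]
  refine Finset.sum_congr rfl fun j hj => ?_
  have hL : ((P.Lset j).card : ℝ) ≠ 0 := by exact_mod_cast (P.Lset_nonempty hj).card_pos.ne'
  rw [← Finset.sum_filter, Finset.sum_const, nsmul_eq_mul, ← Lset, mul_one_div_cancel hL]

def restrict (P : StreamingProblem) (S : Finset ℕ) (hS : S.Nonempty) (hSM : S ⊆ P.M) :
    StreamingProblem where
  N := P.N
  M := S
  t := P.t
  N_nonempty := P.N_nonempty
  M_nonempty := hS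
  streams_pos j hj := P.streams_pos j (hSM hj)

def ones (N : Finset ℕ) (hN : N.Nonempty) (j : ℕ) : StreamingProblem where
  N := N
  M := {j}
  t _ _ := 1
  N_nonempty := hN
  M_nonempty := Finset.singleton_nonempty j
  streams_pos _ _ := by simpa using hN.card_pos

def glue (P Q : StreamingProblem) (hN : Q.N = P.N) : StreamingProblem where
  N := P.N
  M := P.M ∪ Q.M
  t i j := if j ∈ Q.M then Q.t i j else P.t i j
  N_nonempty := P.N_nonempty
  M_nonempty := P.M_nonempty.mono Finset.subset_union_left
  streams_pos j hj := by
    by_cases hjQ : j ∈ Q.M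
    · simpa only [hjQ, if_true, ← hN] using Q.streams_pos j hjQ
    · simpa only [hjQ, if_false] using
        P.streams_pos j ((Finset.mem_union.mp hj).resolve_right hjQ)

lemma glue_t_of_mem_left {P Q : StreamingProblem} (hN : Q.N = P.N) (hdis : Disjoint P.M Q.M)
    {j : ℕ} (hj : j ∈ P.M) (i : ℕ) : (P.glue Q hN).t i j = P.t i j :=
  if_neg (Finset.disjoint_left.mp hdis hj)

lemma glue_t_of_mem_right {P Q : StreamingProblem} (hN : Q.N = P.N) {j : ℕ} (hj : j ∈ Q.M)
    (i : ℕ) : (P.glue Q hN).t i j = Q.t i j :=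
  if_pos hj

end StreamingProblem

lemma additiveIndex_Sh : AdditiveIndex Sh := by
  intro P P₁ P₂ hN₁ hN₂ hM hdis ht₁ ht₂ i hi
  have summand_congr : ∀ Q : StreamingProblem, Q.N = P.N →
      (∀ i ∈ P.N, ∀ j ∈ Q.M, P.t i j = Q.t i j) →
      ∀ j ∈ Q.M, (if 0 < P.t i j then 1 / ((P.Lset j).card : ℝ) else 0) =
        if 0 < Q.t i j then 1 / ((Q.Lset j).card : ℝ) else 0 := by
    intro Q hQN htQ j hj
    rw [htQ i hi j hj, Lset_congr hQN fun k hk => htQ k hk j hj]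
  rw [Sh_eq_sum_ite, Sh_eq_sum_ite, Sh_eq_sum_ite, hM, Finset.sum_union hdis,
    Finset.sum_congr rfl (summand_congr P₁ hN₁ ht₁),
    Finset.sum_congr rfl (summand_congr P₂ hN₂ ht₂)]

lemma nullArtists_Sh : NullArtists Sh := by
  intro P i _ h
  rw [Sh, Finset.filter_false_of_mem fun j hj => by simp [Finset.sum_eq_zero_iff.mp h j hj],
    Finset.sum_empty]

lemma equalGlobalImpactUsers_Sh : EqualGlobalImpactUsers Sh := by
  intro P Q Q' j hj j' hj' _ _ hQM _ _ hQ'M _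
  rw [sum_Sh, sum_Sh, hQM, hQ'M, Finset.card_erase_of_mem hj, Finset.card_erase_of_mem hj']

lemma symmetryOnFans_Sh : SymmetryOnFans Sh := by
  intro P i _ i' _ hF
  exact congrArg (fun F => ∑ j ∈ F, (1 : ℝ) / ((P.Lset j).card : ℝ)) hF

section Scaling

variable {I J : StreamingProblem → ℕ → ℝ} (c : Finset ℕ → ℝ)

lemma AdditiveIndex.of_eq_mul (hJ : AdditiveIndex J)
    (h : ∀ P, ∀ i ∈ P.N, I P i = c P.N * J P i) : AdditiveIndex I := by
  intro P P₁ P₂ hN₁ hN₂ hM hdis ht₁ ht₂ i hi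
  rw [h P i hi, h P₁ i (hN₁ ▸ hi), h P₂ i (hN₂ ▸ hi), hN₁, hN₂,
    hJ P P₁ P₂ hN₁ hN₂ hM hdis ht₁ ht₂ i hi, mul_add]

lemma NullArtists.of_eq_mul (hJ : NullArtists J) (h : ∀ P, ∀ i ∈ P.N, I P i = c P.N * J P i) :
    NullArtists I := by
  intro P i hi h0
  rw [h P i hi, hJ P i hi h0, mul_zero]

lemma EqualGlobalImpactUsers.of_eq_mul (hJ : EqualGlobalImpactUsers J)
    (h : ∀ P, ∀ i ∈ P.N, I P i = c P.N * J P i) : EqualGlobalImpactUsers I := by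
  intro P Q Q' j hj j' hj' hne hQN hQM hQt hQ'N hQ'M hQ't
  rw [Finset.sum_congr rfl (h Q), Finset.sum_congr rfl (h Q'), ← Finset.mul_sum,
    ← Finset.mul_sum, hJ P Q Q' j hj j' hj' hne hQN hQM hQt hQ'N hQ'M hQ't, hQN, hQ'N]

lemma SymmetryOnFans.of_eq_mul (hJ : SymmetryOnFans J)
    (h : ∀ P, ∀ i ∈ P.N, I P i = c P.N * J P i) : SymmetryOnFans I := by
  intro P i hi i' hi' hF
  rw [h P i hi, h P i' hi', hJ P i hi i' hi' hF]

end Scaling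

section Characterization

variable {I : StreamingProblem → ℕ → ℝ}

lemma AdditiveIndex.apply_congr (hAdd : AdditiveIndex I) {P P' : StreamingProblem}
    (hN : P'.N = P.N) (hM : P'.M = P.M) (ht : ∀ i ∈ P.N, ∀ j ∈ P.M, P.t i j = P'.t i j) :
    ∀ i ∈ P.N, I P i = I P' i := by
  -- `P` and `P'` may differ off `N × M`; additivity removes a fresh user from a common extension.
  obtain ⟨k, hk⟩ := Infinite.exists_notMem_finset P.M
  set O := ones P.N P.N_nonempty k
  have hON : O.N = P.N := rfl
  have hdis : Disjoint P.M O.M := Finset.disjoint_singleton_right.mpr hk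
  have hO : ∀ i ∈ P.N, ∀ j ∈ O.M, (P.glue O hON).t i j = O.t i j :=
    fun i _ j hj => glue_t_of_mem_right hON hj i
  intro i hi
  have h₁ := hAdd (P.glue O hON) P O rfl rfl rfl hdis
    (fun i _ j hj => glue_t_of_mem_left hON hdis hj i) hO i hi
  have h₂ := hAdd (P.glue O hON) P' O hN rfl (by rw [hM]; rfl) (hM ▸ hdis)
    (fun i hi j hj => (glue_t_of_mem_left hON hdis (hM ▸ hj) i).trans (ht i hi j (hM ▸ hj)))
    hO i hi
  linarith

lemma AdditiveIndex.eq_of_eq_on_single_user {J : StreamingProblem → ℕ → ℝ}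
    (hI : AdditiveIndex I) (hJ : AdditiveIndex J)
    (h : ∀ P : StreamingProblem, ∀ j, P.M = {j} → ∀ i ∈ P.N, I P i = J P i)
    (P : StreamingProblem) : ∀ i ∈ P.N, I P i = J P i := by
  suffices key : ∀ S (hS : S.Nonempty) (hSM : S ⊆ P.M), ∀ i ∈ P.N,
      I (P.restrict S hS hSM) i = J (P.restrict S hS hSM) i from
    key P.M P.M_nonempty subset_rfl
  intro S hS
  induction hS using Finset.Nonempty.cons_induction with
  | singleton a => exact fun hSM => h (P.restrict {a} _ hSM) a rfl
  | cons a s ha hs ih =>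
    intro hSM i hi
    set A := P.restrict {a} (Finset.singleton_nonempty a)
      (Finset.singleton_subset_iff.mpr (hSM (Finset.mem_cons_self a s)))
    set B := P.restrict s hs ((Finset.subset_cons ha).trans hSM)
    have split : ∀ K, AdditiveIndex K →
        K (P.restrict _ (Finset.cons_nonempty ha) hSM) i = K A i + K B i :=
      fun K hK => hK (P.restrict _ (Finset.cons_nonempty ha) hSM) A B rfl rfl
        ((Finset.cons_eq_insert a s ha).trans (Finset.insert_eq a s))
        (Finset.disjoint_singleton_left.mpr ha) (fun _ _ _ _ => rfl) (fun _ _ _ _ => rfl) i hi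
    rw [split I hI, split J hJ, h A a rfl i hi, ih _ i hi]

lemma sum_eq_of_M_eq_singleton (hAdd : AdditiveIndex I) (hEGIU : EqualGlobalImpactUsers I)
    {P Q : StreamingProblem} {j k : ℕ} (hN : Q.N = P.N) (hP : P.M = {j}) (hQ : Q.M = {k})
    (hjk : j ≠ k) : ∑ i ∈ P.N, I P i = ∑ i ∈ Q.N, I Q i := by
  set R := P.glue Q hN
  have hdis : Disjoint P.M Q.M := by rw [hP, hQ]; exact Finset.disjoint_singleton.mpr hjk
  have hRM : R.M = {j, k} := by rw [show R.M = P.M ∪ Q.M from rfl, hP, hQ]; rfl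
  have hjR : j ∈ R.M := by simp [hRM]
  have hkR : k ∈ R.M := by simp [hRM]
  set Rj := R.restrict {j} (Finset.singleton_nonempty j) (Finset.singleton_subset_iff.mpr hjR)
  set Rk := R.restrict {k} (Finset.singleton_nonempty k) (Finset.singleton_subset_iff.mpr hkR)
  have hPRj : ∀ i ∈ P.N, I P i = I Rj i :=
    hAdd.apply_congr rfl hP.symm fun i _ l hl => (glue_t_of_mem_left hN hdis hl i).symm
  have hQRk : ∀ i ∈ Q.N, I Q i = I Rk i :=
    hAdd.apply_congr hN.symm hQ.symm fun i _ l hl => (glue_t_of_mem_right hN hl i).symm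
  have hRjk : ∑ i ∈ P.N, I Rk i = ∑ i ∈ P.N, I Rj i :=
    hEGIU R Rk Rj j hjR k hkR hjk
      rfl (by rw [hRM, Finset.erase_insert (by simpa using hjk)]; rfl) rfl
      rfl (by rw [hRM, Finset.pair_comm, Finset.erase_insert (by simpa using hjk.symm)]; rfl) rfl
  rw [Finset.sum_congr rfl hPRj, Finset.sum_congr rfl hQRk, hN, hRjk]

/-- The constant `λ_N`. Its value at `N = ∅`, where no streaming problem lives, is arbitrary. -/
noncomputable def singleUserTotal (I : StreamingProblem → ℕ → ℝ) (N : Finset ℕ) : ℝ :=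
  if hN : N.Nonempty then ∑ i ∈ N, I (ones N hN 0) i else 1

lemma singleUserTotal_pos (hI : IsIndex I) (N : Finset ℕ) : 0 < singleUserTotal I N := by
  unfold singleUserTotal
  split_ifs
  exacts [(hI _).2, one_pos]

lemma sum_eq_singleUserTotal (hAdd : AdditiveIndex I) (hEGIU : EqualGlobalImpactUsers I)
    {P : StreamingProblem} {j : ℕ} (hP : P.M = {j}) :
    ∑ i ∈ P.N, I P i = singleUserTotal I P.N := by
  obtain ⟨l, hl⟩ := Infinite.exists_notMem_finset ({j, 0} : Finset ℕ)
  have hjl : j ≠ l := fun h => hl (by simp [h])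
  have hl0 : l ≠ 0 := fun h => hl (by simp [h])
  rw [singleUserTotal, dif_pos P.N_nonempty,
    sum_eq_of_M_eq_singleton hAdd hEGIU (P := P) (Q := ones P.N P.N_nonempty l) rfl hP rfl hjl,
    sum_eq_of_M_eq_singleton hAdd hEGIU (P := ones P.N P.N_nonempty l)
      (Q := ones P.N P.N_nonempty 0) rfl rfl rfl hl0]
  rfl

lemma apply_eq_sum_mul_Sh_of_M_eq_singleton (hNull : NullArtists I) (hSym : SymmetryOnFans I)
    {P : StreamingProblem} {j : ℕ} (hP : P.M = {j}) :
    ∀ i ∈ P.N, I P i = (∑ k ∈ P.N, I P k) * P.Sh i := by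
  have hzero : ∀ i ∈ P.N, ¬ 0 < P.t i j → I P i = 0 := fun i hi h =>
    hNull P i hi (by rw [hP, Finset.sum_singleton]; omega)
  have hfans : ∀ i ∈ P.Lset j, P.Fset i = {j} := fun i hi => by
    rw [Fset, hP, Finset.filter_singleton, if_pos (Finset.mem_filter.mp hi).2]
  have hsum : ∀ i ∈ P.Lset j, ∑ k ∈ P.N, I P k = (P.Lset j).card * I P i := by
    intro i hi
    have hiN := (Finset.mem_filter.mp hi).1
    have hsupp : ∑ k ∈ P.Lset j, I P k = ∑ k ∈ P.N, I P k :=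
      Finset.sum_filter_of_ne fun k hk h => by_contra fun ht => h (hzero k hk ht)
    have hsym : ∀ k ∈ P.Lset j, I P k = I P i := fun k hk =>
      hSym P k (Finset.mem_filter.mp hk).1 i hiN ((hfans k hk).trans (hfans i hi).symm)
    rw [← hsupp, Finset.sum_congr rfl hsym, Finset.sum_const, nsmul_eq_mul]
  intro i hi
  rw [Sh_of_M_eq_singleton hP]
  split_ifs with h
  · have hiL : i ∈ P.Lset j := Finset.mem_filter.mpr ⟨hi, h⟩
    have hL : ((P.Lset j).card : ℝ) ≠ 0 := by
      exact_mod_cast (Finset.card_pos.mpr ⟨i, hiL⟩).ne'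
    rw [hsum i hiL, mul_one_div, mul_div_cancel_left₀ _ hL]
  · rw [hzero i hi h, mul_zero]

lemma eq_singleUserTotal_mul_Sh (hAdd : AdditiveIndex I) (hNull : NullArtists I)
    (hEGIU : EqualGlobalImpactUsers I) (hSym : SymmetryOnFans I) :
    ∀ P : StreamingProblem, ∀ i ∈ P.N, I P i = singleUserTotal I P.N * P.Sh i :=
  hAdd.eq_of_eq_on_single_user (additiveIndex_Sh.of_eq_mul _ fun _ _ _ => rfl)
    fun _ _ hP i hi => by
      rw [apply_eq_sum_mul_Sh_of_M_eq_singleton hNull hSym hP i hi,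
        sum_eq_singleUserTotal hAdd hEGIU hP]

lemma reward_eq_Sh {P : StreamingProblem} {c : ℝ} (hc : c ≠ 0)
    (h : ∀ i ∈ P.N, I P i = c * P.Sh i) : ∀ i ∈ P.N, Reward I P i = P.Sh i := by
  intro i hi
  have hM : (P.M.card : ℝ) ≠ 0 := by exact_mod_cast P.M_nonempty.card_pos.ne'
  rw [Reward, h i hi, Finset.sum_congr rfl h, ← Finset.mul_sum, sum_Sh]
  field_simp

end Characterization

/-- Characterization of the Shapley index. -/
theorem shapley_characterization_5 (I : StreamingProblem → ℕ → ℝ) (hI : IsIndex I) :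
    ((AdditiveIndex I ∧ NullArtists I ∧ EqualGlobalImpactUsers I ∧ SymmetryOnFans I) ↔
      ∃ lam : Finset ℕ → ℝ, (∀ N : Finset ℕ, 0 < lam N) ∧
        ∀ P : StreamingProblem, ∀ i ∈ P.N, I P i = lam P.N * P.Sh i) ∧
    ((AdditiveIndex I ∧ NullArtists I ∧ EqualGlobalImpactUsers I ∧ SymmetryOnFans I) →
      ∀ P : StreamingProblem, ∀ i ∈ P.N, Reward I P i = P.Sh i) := by
  have forward :
      AdditiveIndex I ∧ NullArtists I ∧ EqualGlobalImpactUsers I ∧ SymmetryOnFans I →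
      ∀ P : StreamingProblem, ∀ i ∈ P.N, I P i = singleUserTotal I P.N * P.Sh i :=
    fun ⟨hAdd, hNull, hEGIU, hSym⟩ => eq_singleUserTotal_mul_Sh hAdd hNull hEGIU hSym
  refine ⟨⟨fun hax => ⟨singleUserTotal I, singleUserTotal_pos hI, forward hax⟩, ?_⟩, ?_⟩
  · rintro ⟨lam, -, hrep⟩
    exact ⟨additiveIndex_Sh.of_eq_mul lam hrep, nullArtists_Sh.of_eq_mul lam hrep,
      equalGlobalImpactUsers_Sh.of_eq_mul lam hrep, symmetryOnFans_Sh.of_eq_mul lam hrep⟩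
  · exact fun hax P => reward_eq_Sh (singleUserTotal_pos hI P.N).ne' (forward hax P)
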